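/- Let G be a group, f : G → ℂ a function of positive type, and V_f the span of the left translates f_x : g ↦ f(x⁻¹g) for x ∈ G. Then the sesquilinear form determined by ⟨f_x, f_y⟩ = f(x⁻¹y) is a well-defined positive semidefinite Hermitian form on V_f, satisfying ⟨φ, f_x⟩ = φ(x) for all φ ∈ V_f and x ∈ G. -/
import Mathlib


open scoped ComplexConjugate ComplexOrder
open Finset

/-- A function on a group is of positive type if all the matrices
`(f (gᵢ⁻¹ gⱼ))` are (Hermitian) positive semidefinite. -/
def IsPosTypeFun {G : Type*} [Group G] (f : G → ℂ) : Prop :=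
  ∀ (n : ℕ) (g : Fin n → G) (c : Fin n → ℂ),
    0 ≤ ∑ i, ∑ j, conj (c i) * c j * f ((g i)⁻¹ * g j)

/-- The left translate `f_x : g ↦ f (x⁻¹ g)`. -/
def lTrans {G : Type*} [Group G] (f : G → ℂ) (x : G) : G → ℂ := fun g => f (x⁻¹ * g)

/-- The span `V_f` of the left translates of `f`. -/
noncomputable def Vf {G : Type*} [Group G] (f : G → ℂ) : Submodule ℂ (G → ℂ) :=
  Submodule.span ℂ (Set.range (lTrans f))

/-- The translate `f_x` as an element of `V_f`. -/
noncomputable def transElt {G : Type*} [Group G] (f : G → ℂ) (x : G) : Vf f :=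
  ⟨lTrans f x, Submodule.subset_span (Set.mem_range_self x)⟩

section Aux

variable {G : Type*} [Group G] (f : G → ℂ)

noncomputable def piMap : (G →₀ ℂ) →ₗ[ℂ] (G → ℂ) :=
  Finsupp.linearCombination ℂ (lTrans f)

lemma piMap_apply (a : G →₀ ℂ) (g : G) :
    piMap f a g = a.sum fun x c => c * f (x⁻¹ * g) := by
  simp [piMap, Finsupp.linearCombination_apply, Finsupp.sum_apply, lTrans, Finsupp.sum]

lemma piMap_mem (a : G →₀ ℂ) : piMap f a ∈ Vf f := by
  rw [Vf, ← Finsupp.range_linearCombination]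
  exact ⟨a, rfl⟩

noncomputable def piV : (G →₀ ℂ) →ₗ[ℂ] Vf f :=
  LinearMap.codRestrict (Vf f) (piMap f) (piMap_mem f)

lemma piV_surj : Function.Surjective (piV f) := by
  rintro ⟨v, hv⟩
  rw [Vf, ← Finsupp.range_linearCombination] at hv
  obtain ⟨a, ha⟩ := hv
  exact ⟨a, Subtype.ext ha⟩

noncomputable def Bmap (a : G →₀ ℂ) : Vf f →ₗ⋆[ℂ] ℂ where
  toFun ψ := a.sum fun x c => c * conj ((ψ : G → ℂ) x)
  map_add' ψ χ := by
    simp [Finsupp.sum, mul_add, Finset.sum_add_distrib]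
  map_smul' m ψ := by
    simp [Finsupp.sum, Finset.mul_sum, mul_left_comm]

lemma Bmap_apply (a : G →₀ ℂ) (ψ : Vf f) :
    Bmap f a ψ = a.sum fun x c => c * conj ((ψ : G → ℂ) x) := rfl

noncomputable def Bl : (G →₀ ℂ) →ₗ[ℂ] (Vf f →ₗ⋆[ℂ] ℂ) where
  toFun := Bmap f
  map_add' a b := by
    ext ψ
    simp only [Bmap_apply, LinearMap.add_apply]
    rw [Finsupp.sum_add_index'] <;> simp [add_mul]
  map_smul' m a := by
    ext ψ
    simp only [Bmap_apply, RingHom.id_apply, LinearMap.smul_apply, smul_eq_mul]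
    rw [Finsupp.sum_smul_index (by simp)]
    rw [Finsupp.mul_sum]
    simp [mul_assoc]

lemma conjf (hsym : ∀ g : G, f g⁻¹ = conj (f g)) (x y : G) :
    conj (f (x⁻¹ * y)) = f (y⁻¹ * x) := by
  rw [← hsym, mul_inv_rev, inv_inv]

lemma piV_coe (a : G →₀ ℂ) : ((piV f a : Vf f) : G → ℂ) = piMap f a := rfl

lemma Bmap_piV (hsym : ∀ g : G, f g⁻¹ = conj (f g)) (a b : G →₀ ℂ) :
    Bmap f a (piV f b) =
      ∑ x ∈ a.support, ∑ y ∈ b.support, a x * (conj (b y) * f (x⁻¹ * y)) := by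
  rw [Bmap_apply]
  rw [Finsupp.sum]
  refine Finset.sum_congr rfl fun x _ => ?_
  rw [piV_coe]
  rw [piMap_apply, Finsupp.sum]
  rw [map_sum, Finset.mul_sum]
  refine Finset.sum_congr rfl fun y _ => ?_
  rw [map_mul, conjf f hsym]

lemma Bmap_transElt (a : G →₀ ℂ) (x : G)
    (hsym : ∀ g : G, f g⁻¹ = conj (f g)) :
    Bmap f a (transElt f x) = piMap f a x := by
  rw [Bmap_apply, piMap_apply]
  refine Finset.sum_congr rfl fun y _ => ?_
  show a y * conj (f (x⁻¹ * y)) = a y * f (y⁻¹ * x)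
  rw [conjf f hsym]

lemma Bmap_ker (hsym : ∀ g : G, f g⁻¹ = conj (f g)) (a : G →₀ ℂ)
    (ha : piMap f a = 0) : Bmap f a = 0 := by
  have key : ∀ v ∈ Vf f, (a.sum fun x c => c * conj (v x)) = 0 := by
    intro v hv
    induction hv using Submodule.span_induction with
    | mem v hmem =>
      obtain ⟨y, rfl⟩ := hmem
      have : (a.sum fun x c => c * conj (lTrans f y x)) = piMap f a y := by
        rw [piMap_apply]
        refine Finset.sum_congr rfl fun x _ => ?_
        show a x * conj (f (y⁻¹ * x)) = a x * f (x⁻¹ * y)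
        rw [conjf f hsym]
      rw [this, ha]
      rfl
    | zero => simp
    | add v w _ _ h1 h2 =>
      have : (a.sum fun x c => c * conj ((v + w) x))
          = (a.sum fun x c => c * conj (v x)) + a.sum fun x c => c * conj (w x) := by
        simp [Finsupp.sum, mul_add, Finset.sum_add_distrib]
      rw [this, h1, h2, add_zero]
    | smul m v _ h =>
      have : (a.sum fun x c => c * conj ((m • v) x))
          = conj m * a.sum fun x c => c * conj (v x) := by
        simp [Finsupp.sum, Finset.mul_sum, mul_left_comm]
      rw [this, h, mul_zero]
  ext ψ
  obtain ⟨v, hv⟩ := ψ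
  exact key v hv

lemma piV_single (x : G) : piV f (Finsupp.single x 1) = transElt f x := by
  apply Subtype.ext
  show piMap f (Finsupp.single x 1) = lTrans f x
  simp [piMap]

lemma Bmap_pos (hf : IsPosTypeFun f) (hsym : ∀ g : G, f g⁻¹ = conj (f g))
    (a : G →₀ ℂ) : 0 ≤ Bmap f a (piV f a) := by
  rw [Bmap_piV f hsym]
  set s := a.support with hs
  set n := s.card with hn
  set e : Fin n → s := fun i => s.equivFin.symm i with he
  have h := hf n (fun i => (e i : G)) (fun i => conj (a ((e i : G))))
  simp only [Complex.conj_conj] at h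
  have key : (∑ x ∈ s, ∑ y ∈ s, a x * (conj (a y) * f (x⁻¹ * y)))
      = ∑ i : Fin n, ∑ j : Fin n,
        a ((e i : G)) * conj (a ((e j : G))) * f (((e i : G))⁻¹ * (e j : G)) := by
    rw [← Finset.sum_coe_sort s, ← Equiv.sum_comp s.equivFin.symm]
    refine Finset.sum_congr rfl fun i _ => ?_
    rw [← Finset.sum_coe_sort s, ← Equiv.sum_comp s.equivFin.symm]
    refine Finset.sum_congr rfl fun j _ => ?_
    rw [mul_assoc]
  rw [key]
  exact h

theorem herm {G : Type*} [Group G] {f : G → ℂ} (hf : IsPosTypeFun f) (g : G) :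
    f g⁻¹ = conj (f g) := by
  have h0 : (f 1).im = 0 := by
    have := hf 1 ![1] ![1]
    simp [Fin.sum_univ_one] at this
    exact (Complex.le_def.mp this).2.symm
  have h1 := hf 2 ![1, g] ![1, 1]
  have h2 := hf 2 ![1, g] ![1, Complex.I]
  have e1 := (Complex.le_def.mp h1).2
  have e2 := (Complex.le_def.mp h2).2
  simp [Fin.sum_univ_two, Complex.add_im, Complex.mul_im, Complex.mul_re, h0] at e1 e2
  apply Complex.ext <;> simp [Complex.conj_im, Complex.conj_re]
  · linarith
  · linarith



end Aux

theorem exists_hermitian_form_on_span_of_translates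
    {G : Type*} [Group G] (f : G → ℂ) (hf : IsPosTypeFun f) :
    ∃ B : Vf f →ₗ[ℂ] (Vf f →ₗ⋆[ℂ] ℂ),
      (∀ φ ψ : Vf f, B ψ φ = conj (B φ ψ)) ∧
      (∀ φ : Vf f, 0 ≤ B φ φ) ∧
      (∀ x y : G, B (transElt f x) (transElt f y) = f (x⁻¹ * y)) ∧
      (∀ (φ : Vf f) (x : G), B φ (transElt f x) = (φ : G → ℂ) x) := by
  have hsym : ∀ g : G, f g⁻¹ = conj (f g) := herm hf
  have hK : LinearMap.ker (piV f) ≤ LinearMap.ker (Bl f) := by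
    intro a ha
    rw [LinearMap.mem_ker] at ha ⊢
    have h0 : piMap f a = 0 := congrArg Subtype.val ha
    exact Bmap_ker f hsym a h0
  let e := LinearMap.quotKerEquivOfSurjective (piV f) (piV_surj f)
  let B : Vf f →ₗ[ℂ] (Vf f →ₗ⋆[ℂ] ℂ) :=
    ((LinearMap.ker (piV f)).liftQ (Bl f) hK).comp e.symm.toLinearMap
  have hB : ∀ a : G →₀ ℂ, B (piV f a) = Bl f a := by
    intro a
    show ((LinearMap.ker (piV f)).liftQ (Bl f) hK) (e.symm (piV f a)) = Bl f a
    have he : e (Submodule.Quotient.mk a) = piV f a := rfl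
    rw [← he, LinearEquiv.symm_apply_apply, Submodule.liftQ_apply]
  have h4 : ∀ (φ : Vf f) (x : G), B φ (transElt f x) = (φ : G → ℂ) x := by
    intro φ x
    obtain ⟨a, rfl⟩ := piV_surj f φ
    rw [hB]
    show Bmap f a (transElt f x) = _
    rw [Bmap_transElt f a x hsym, piV_coe]
  refine ⟨B, ?_, ?_, ?_, h4⟩
  · intro φ ψ
    obtain ⟨a, rfl⟩ := piV_surj f φ
    obtain ⟨b, rfl⟩ := piV_surj f ψ
    rw [hB, hB]
    show Bmap f b (piV f a) = conj (Bmap f a (piV f b))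
    rw [Bmap_piV f hsym, Bmap_piV f hsym]
    simp only [map_sum, map_mul, Complex.conj_conj, conjf f hsym]
    rw [Finset.sum_comm]
    refine Finset.sum_congr rfl fun x _ => ?_
    refine Finset.sum_congr rfl fun y _ => ?_
    ring
  · intro φ
    obtain ⟨a, rfl⟩ := piV_surj f φ
    rw [hB]
    exact Bmap_pos f hf hsym a
  · intro x y
    rw [h4 (transElt f x) y]
    rfl
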